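/- Let R be a commutative ring with nonzero identity and I a proper radical ideal of R. Then Γ_I(R) is complemented if and only if the total quotient ring T(R/I) is von Neumann regular. -/

import Mathlib

open Ideal Polynomial

-- The zero-divisor graph Γ(S): vertices are the nonzero zero-divisors,
-- distinct vertices adjacent iff their product is zero.  We realize it as a
-- graph on the whole ring whose adjacency relation encodes vertexhood.
def zdVertexSet (S : Type*) [CommRing S] : Set S :=
  {x | x ≠ 0 ∧ ∃ y, y ≠ 0 ∧ x * y = 0}

def zdGraph (S : Type*) [CommRing S] : SimpleGraph S where
  Adj x y := x ≠ y ∧ x ≠ 0 ∧ y ≠ 0 ∧ x * y = 0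
  symm := ⟨fun x y ⟨h1, h2, h3, h4⟩ => ⟨h1.symm, h3, h2, by rwa [mul_comm]⟩⟩
  loopless := ⟨fun x h => h.1 rfl⟩

-- The ideal-based zero-divisor graph Γ_I(R):
-- vertices {x ∈ R \ I : ∃ y ∈ R \ I, x*y ∈ I}, distinct x,y adjacent iff x*y ∈ I.
def idealVertexSet {R : Type*} [CommRing R] (I : Ideal R) : Set R :=
  {x | x ∉ I ∧ ∃ y, y ∉ I ∧ x * y ∈ I}

def idealGraph {R : Type*} [CommRing R] (I : Ideal R) : SimpleGraph R where
  Adj x y := x ≠ y ∧ x ∉ I ∧ y ∉ I ∧ x * y ∈ I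
  symm := ⟨fun x y ⟨h1, h2, h3, h4⟩ => ⟨h1.symm, h3, h2, by rwa [mul_comm]⟩⟩
  loopless := ⟨fun x h => h.1 rfl⟩

-- a ⊥ b : a and b are adjacent and no vertex is adjacent to both.
def Orth {V : Type*} (G : SimpleGraph V) (a b : V) : Prop :=
  G.Adj a b ∧ ∀ c, ¬(G.Adj a c ∧ G.Adj b c)

-- a ~ b : a and b are nonadjacent with exactly the same neighbors.
def Sim {V : Type*} (G : SimpleGraph V) (a b : V) : Prop :=
  ¬G.Adj a b ∧ ∀ c, G.Adj a c ↔ G.Adj b c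

-- A graph (with specified vertex set S) is complemented if every vertex has an
-- orthogonal partner.
def Complemented {V : Type*} (G : SimpleGraph V) (S : Set V) : Prop :=
  ∀ a ∈ S, ∃ b ∈ S, Orth G a b

def UniquelyComplemented {V : Type*} (G : SimpleGraph V) (S : Set V) : Prop :=
  Complemented G S ∧ ∀ a b c, Orth G a b → Orth G a c → Sim G b c

/-!
Passing to `R ⧸ I` identifies `Γ_I(R)` with the zero-divisor graph of the reduced ring `R ⧸ I`,
pulled back along the quotient map, and complementedness survives this pullback. In a reduced
ring `S`, vertices `a, b` of `Γ(S)` are orthogonal exactly when `a * b = 0` and `a + b` is a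
non-zero-divisor, because `z * (a + b) = 0` and `a * b = 0` force `z * a = z * b = 0`. Such a
complement `b` of `a` makes `x = a / s` regular in `T(S)` with quasi-inverse `s / (a + b)`;
conversely a quasi-inverse `t` of `a` gives the idempotent `e = a t`, and writing
`1 - e = b / s` produces a complement `b`.
-/

open nonZeroDivisors

def IsVonNeumannRegular (T : Type*) [Mul T] : Prop :=
  ∀ x : T, ∃ y, x = x * y * x

def HasRegularComplements (S : Type*) [CommRing S] : Prop :=
  ∀ a : S, ∃ b, a * b = 0 ∧ a + b ∈ S⁰

section Reduced

variable {S : Type*} [CommRing S] [IsReduced S]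

theorem ne_of_ne_zero_of_mul_eq_zero {a b : S} (ha : a ≠ 0) (hab : a * b = 0) : a ≠ b := by
  rintro rfl
  exact ha (IsReduced.eq_zero a ⟨2, by rwa [sq]⟩)

theorem mul_eq_zero_of_mul_add_eq_zero {a b z : S} (hab : a * b = 0) (h : z * (a + b) = 0) :
    z * a = 0 :=
  IsReduced.eq_zero _ ⟨2, by linear_combination (z * a) * h - z ^ 2 * hab⟩

theorem orth_zdGraph_iff {a b : S} :
    Orth (zdGraph S) a b ↔ a ≠ 0 ∧ b ≠ 0 ∧ a * b = 0 ∧ a + b ∈ S⁰ := by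
  constructor
  · rintro ⟨⟨-, ha, hb, hab⟩, hcommon⟩
    refine ⟨ha, hb, hab, mem_nonZeroDivisors_iff_right.mpr fun z hz ↦ ?_⟩
    by_contra hz0
    have hza : a * z = 0 := by rw [mul_comm]; exact mul_eq_zero_of_mul_add_eq_zero hab hz
    have hzb : b * z = 0 := by
      rw [mul_comm]
      exact mul_eq_zero_of_mul_add_eq_zero (by rwa [mul_comm]) (by rwa [add_comm])
    exact hcommon z ⟨⟨ne_of_ne_zero_of_mul_eq_zero ha hza, ha, hz0, hza⟩,
      ⟨ne_of_ne_zero_of_mul_eq_zero hb hzb, hb, hz0, hzb⟩⟩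
  · rintro ⟨ha, hb, hab, hreg⟩
    refine ⟨⟨ne_of_ne_zero_of_mul_eq_zero ha hab, ha, hb, hab⟩, ?_⟩
    rintro z ⟨⟨-, -, hz, haz⟩, ⟨-, -, -, hbz⟩⟩
    exact hz (mem_nonZeroDivisors_iff_right.mp hreg z (by linear_combination haz + hbz))

theorem complemented_zdGraph_iff :
    Complemented (zdGraph S) (zdVertexSet S) ↔ HasRegularComplements S := by
  constructor
  · intro h a
    by_cases ha : a = 0
    · exact ⟨1, by simp [ha], by simp [ha]⟩
    by_cases hreg : a ∈ S⁰
    · exact ⟨0, mul_zero a, by simpa using hreg⟩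
    obtain ⟨c, hac, hc⟩ := notMem_nonZeroDivisors_iff_left.mp hreg
    obtain ⟨b, -, horth⟩ := h a ⟨ha, c, hc, hac⟩
    obtain ⟨-, -, hab, habreg⟩ := orth_zdGraph_iff.mp horth
    exact ⟨b, hab, habreg⟩
  · rintro h a ⟨ha, c, hc, hac⟩
    obtain ⟨b, hab, hreg⟩ := h a
    have hb : b ≠ 0 := by
      rintro rfl
      rw [add_zero] at hreg
      exact hc (mem_nonZeroDivisors_iff_left.mp hreg c hac)
    exact ⟨b, ⟨hb, a, ha, by rwa [mul_comm]⟩, orth_zdGraph_iff.mpr ⟨ha, hb, hab, hreg⟩⟩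

end Reduced

namespace IsFractionRing

variable {S T : Type*} [CommRing S] [CommRing T] [Algebra S T] [IsFractionRing S T]

theorem isVonNeumannRegular_of_hasRegularComplements (h : HasRegularComplements S) :
    IsVonNeumannRegular T := by
  intro x
  obtain ⟨⟨a, s⟩, hx⟩ := IsLocalization.surj S⁰ x
  obtain ⟨b, hab, hreg⟩ := h a
  obtain ⟨u, hu⟩ : IsUnit (algebraMap S T (a + b)) :=
    IsLocalization.map_units T (⟨a + b, hreg⟩ : S⁰)
  have hxb : x * algebraMap S T b = 0 := by
    refine (IsLocalization.map_units T s).mul_left_eq_zero.mp ?_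
    rw [mul_right_comm, hx, ← map_mul, hab, map_zero]
  refine ⟨algebraMap S T s * ↑u⁻¹, ?_⟩
  calc x = x * u * ↑u⁻¹ := by simp
    _ = x * algebraMap S T a * ↑u⁻¹ := by rw [hu, map_add, mul_add, hxb, add_zero]
    _ = x * (algebraMap S T s * ↑u⁻¹) * x := by rw [← hx]; ring

theorem hasRegularComplements_of_isVonNeumannRegular [IsReduced S] (h : IsVonNeumannRegular T) :
    HasRegularComplements S := by
  intro a
  obtain ⟨t, ht⟩ := h (algebraMap S T a)
  obtain ⟨⟨b, s⟩, hb⟩ := IsLocalization.surj S⁰ (1 - algebraMap S T a * t)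
  have hab : a * b = 0 := by
    apply IsFractionRing.injective S T
    rw [map_mul, map_zero, ← hb]
    linear_combination (algebraMap S T s) * ht
  refine ⟨b, hab, mem_nonZeroDivisors_iff_right.mpr fun z hz ↦ ?_⟩
  have hza : z * a = 0 := mul_eq_zero_of_mul_add_eq_zero hab hz
  have hzb : z * b = 0 :=
    mul_eq_zero_of_mul_add_eq_zero (by rwa [mul_comm]) (by rwa [add_comm])
  have hze : algebraMap S T z * (1 - algebraMap S T a * t) = 0 :=
    (IsLocalization.map_units T s).mul_left_eq_zero.mp
      (by rw [mul_assoc, hb, ← map_mul, hzb, map_zero])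
  have hza' : algebraMap S T z * algebraMap S T a = 0 := by rw [← map_mul, hza, map_zero]
  rw [← IsFractionRing.to_map_eq_zero_iff (K := T)]
  linear_combination hze + t * hza'

theorem isVonNeumannRegular_iff [IsReduced S] :
    IsVonNeumannRegular T ↔ HasRegularComplements S :=
  ⟨hasRegularComplements_of_isVonNeumannRegular, isVonNeumannRegular_of_hasRegularComplements⟩

end IsFractionRing

section Comap

variable {V W : Type*} {H : SimpleGraph W} {f : V → W}

theorem orth_comap_iff (hf : Function.Surjective f) {a b : V} :
    Orth (H.comap f) a b ↔ Orth H (f a) (f b) := by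
  simp only [Orth, SimpleGraph.comap_adj, hf.forall]

theorem complemented_comap_iff (hf : Function.Surjective f) {T : Set W} :
    Complemented (H.comap f) (f ⁻¹' T) ↔ Complemented H T := by
  simp only [Complemented, Set.mem_preimage, orth_comap_iff hf, hf.forall, hf.exists]

end Comap

section IdealGraph

variable {R : Type*} [CommRing R] {I : Ideal R}

theorem idealVertexSet_eq_preimage :
    idealVertexSet I = Ideal.Quotient.mk I ⁻¹' zdVertexSet (R ⧸ I) := by
  ext a
  simp only [idealVertexSet, zdVertexSet, Set.mem_ofPred_eq, Set.mem_preimage,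
    Ideal.Quotient.mk_surjective.exists, ← map_mul, Ne, Ideal.Quotient.eq_zero_iff_mem]

theorem idealGraph_eq_comap (hI : I.IsRadical) :
    idealGraph I = (zdGraph (R ⧸ I)).comap (Ideal.Quotient.mk I) := by
  have := (Ideal.isRadical_iff_quotient_reduced I).mp hI
  ext a b
  simp only [idealGraph, zdGraph, SimpleGraph.comap_adj, ← Ideal.Quotient.eq_zero_iff_mem,
    map_mul]
  exact ⟨fun ⟨_, ha, hb, hab⟩ ↦ ⟨ne_of_ne_zero_of_mul_eq_zero ha hab, ha, hb, hab⟩,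
    fun ⟨hne, h⟩ ↦ ⟨fun h' ↦ hne (congrArg _ h'), h⟩⟩

end IdealGraph

theorem stmt12_general {R : Type*} [CommRing R] (I : Ideal R)
    (hrad : I.radical = I) :
    Complemented (idealGraph I) (idealVertexSet I) ↔
      ∀ x : Localization (nonZeroDivisors (R ⧸ I)), ∃ y, x = x * y * x := by
  have hI : I.IsRadical := Ideal.radical_eq_iff.mp hrad
  have : IsReduced (R ⧸ I) := (Ideal.isRadical_iff_quotient_reduced I).mp hI
  rw [idealGraph_eq_comap hI, idealVertexSet_eq_preimage,
    complemented_comap_iff Ideal.Quotient.mk_surjective, complemented_zdGraph_iff]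
  exact IsFractionRing.isVonNeumannRegular_iff.symm

theorem stmt12 {R : Type*} [CommRing R] [Nontrivial R] (I : Ideal R)
    (hI : I ≠ ⊤) (hrad : I.radical = I) :
    Complemented (idealGraph I) (idealVertexSet I) ↔
      ∀ x : Localization (nonZeroDivisors (R ⧸ I)), ∃ y, x = x * y * x :=
  stmt12_general I hrad
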